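/- For every integer p ≥ 1, the sets of vertices (extreme points) of the polar polygons are: V(Q̊_p^[1]) = {(−2/(p+1), (p−1)/(p+1)), (1, −(p+1)), (1, 2)}; V(Q̊_p^[2]) = {(−2/(p+1), (p−1)/(p+1)), (0, −1), (1, −p), (1, 2)}; V(Q̊_p^[3]) = {(−2/(p+1), (p−1)/(p+1)), (0, −1), (1, −p), (1, 1), (0, 1)}. -/

import Mathlib

/-- Q_p^[1] := conv({(1,−1),(p,1),(−1,0)}). -/
def Qpoly1 (p : ℤ) : Set (ℝ × ℝ) :=
  convexHull ℝ ({(1, -1), ((p : ℝ), 1), (-1, 0)} : Set (ℝ × ℝ))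

/-- Q_p^[2] := conv({(1,−1),(p,1),(p−1,1),(−1,0)}). -/
def Qpoly2 (p : ℤ) : Set (ℝ × ℝ) :=
  convexHull ℝ ({(1, -1), ((p : ℝ), 1), ((p : ℝ) - 1, 1), (-1, 0)} : Set (ℝ × ℝ))

/-- Q_p^[3] := conv({(1,−1),(p,1),(p−1,1),(−1,0),(0,−1)}). -/
def Qpoly3 (p : ℤ) : Set (ℝ × ℝ) :=
  convexHull ℝ ({(1, -1), ((p : ℝ), 1), ((p : ℝ) - 1, 1), (-1, 0), (0, -1)} : Set (ℝ × ℝ))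

/-- Q_p^[k] for k ∈ {1,2,3}. -/
def Qpoly (p : ℤ) (k : ℕ) : Set (ℝ × ℝ) :=
  if k = 1 then Qpoly1 p else if k = 2 then Qpoly2 p else Qpoly3 p

/-- The lattice ℤ² viewed inside ℝ². -/
def latticePts : Set (ℝ × ℝ) := {x | ∃ m n : ℤ, x = ((m : ℝ), (n : ℝ))}

/-- The polar polygon Q̊ := {y : ⟨y,x⟩ ≥ −1 for all x ∈ Q}. -/
def polar2 (Q : Set (ℝ × ℝ)) : Set (ℝ × ℝ) :=
  {y | ∀ x ∈ Q, -1 ≤ y.1 * x.1 + y.2 * x.2}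

/-- ℓ_p := (p+1)/2 if p is odd, p+1 if p is even. -/
def ellp (p : ℤ) : ℤ := if Odd p then (p + 1) / 2 else p + 1

/-!
The polar of `conv S` is the intersection of the half-planes `⟨y, s⟩ ≥ -1`, `s ∈ S`. Splitting it
into one, two or three triangles and writing each point in barycentric coordinates shows that it is
the convex hull of the listed points, so its extreme points are among them. Conversely, each listed
point `v` lies on two bounding lines `⟨·, a⟩ = -1`, `⟨·, b⟩ = -1` with independent normals, so
`⟨·, a + b⟩` attains its minimum `-2` on the polar at `v` only: `v` is exposed, hence extreme.
-/

open Set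

theorem convex_setOf_le_dot (c : ℝ) (w : ℝ × ℝ) :
    Convex ℝ {x : ℝ × ℝ | c ≤ w.1 * x.1 + w.2 * x.2} :=
  convex_halfSpace_ge ⟨fun u v => by simp only [Prod.fst_add, Prod.snd_add]; ring,
    fun a u => by simp only [Prod.smul_fst, Prod.smul_snd, smul_eq_mul]; ring⟩ c

theorem convex_polar2 (Q : Set (ℝ × ℝ)) : Convex ℝ (polar2 Q) := by
  have : polar2 Q = ⋂ x ∈ Q, {y : ℝ × ℝ | -1 ≤ x.1 * y.1 + x.2 * y.2} := by
    ext; simp [polar2, mul_comm]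
  rw [this]
  exact convex_iInter₂ fun x _ => convex_setOf_le_dot _ x

theorem polar2_convexHull (S : Set (ℝ × ℝ)) : polar2 (convexHull ℝ S) = polar2 S :=
  Subset.antisymm (fun _ hy x hx => hy x (subset_convexHull ℝ S hx))
    fun y hy _ hx => convexHull_min hy (convex_setOf_le_dot (-1) y) hx

theorem eq_of_dot_eq_of_det_ne_zero {u v a b : ℝ × ℝ} (hab : a.1 * b.2 - a.2 * b.1 ≠ 0)
    (ha : u.1 * a.1 + u.2 * a.2 = v.1 * a.1 + v.2 * a.2)
    (hb : u.1 * b.1 + u.2 * b.2 = v.1 * b.1 + v.2 * b.2) : u = v :=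
  Prod.ext (mul_left_cancel₀ hab (by linear_combination b.2 * ha - a.2 * hb))
    (mul_left_cancel₀ hab (by linear_combination a.1 * hb - b.1 * ha))

theorem mem_exposedPoints_polar2 {Q : Set (ℝ × ℝ)} {v a b : ℝ × ℝ} (hv : v ∈ polar2 Q)
    (ha : a ∈ Q) (hb : b ∈ Q) (hab : a.1 * b.2 - a.2 * b.1 ≠ 0)
    (hva : v.1 * a.1 + v.2 * a.2 = -1) (hvb : v.1 * b.1 + v.2 * b.2 = -1) :
    v ∈ (polar2 Q).exposedPoints ℝ := by
  refine ⟨hv, -((a.1 + b.1) • ContinuousLinearMap.fst ℝ ℝ ℝ +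
    (a.2 + b.2) • ContinuousLinearMap.snd ℝ ℝ ℝ), fun y hy => ?_⟩
  have hya := hy a ha
  have hyb := hy b hb
  simp only [neg_apply, add_apply, smul_apply, ContinuousLinearMap.coe_fst',
    ContinuousLinearMap.coe_snd', smul_eq_mul, neg_le_neg_iff]
  exact ⟨by linarith, fun h => eq_of_dot_eq_of_det_ne_zero hab (by linarith) (by linarith)⟩

theorem extremePoints_polar2_eq {Q V : Set (ℝ × ℝ)} (hQV : polar2 Q = convexHull ℝ V)
    (htight : ∀ v ∈ V, ∃ a ∈ Q, ∃ b ∈ Q, a.1 * b.2 - a.2 * b.1 ≠ 0 ∧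
      v.1 * a.1 + v.2 * a.2 = -1 ∧ v.1 * b.1 + v.2 * b.2 = -1) :
    (polar2 Q).extremePoints ℝ = V := by
  refine Subset.antisymm (hQV ▸ extremePoints_convexHull_subset) fun v hv => ?_
  obtain ⟨a, ha, b, hb, hab, hva, hvb⟩ := htight v hv
  have hvQ : v ∈ polar2 Q := hQV ▸ subset_convexHull ℝ V hv
  exact exposedPoints_subset_extremePoints (mem_exposedPoints_polar2 hvQ ha hb hab hva hvb)

theorem mem_convexHull_of_add_add_smul_eq {E : Type*} [AddCommGroup E] [Module ℝ E]
    {s : Set E} {x₁ x₂ x₃ y : E} (h₁ : x₁ ∈ s) (h₂ : x₂ ∈ s) (h₃ : x₃ ∈ s) {a b c : ℝ}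
    (ha : 0 ≤ a) (hb : 0 ≤ b) (hc : 0 ≤ c) (habc : a + b + c = 1)
    (hy : a • x₁ + b • x₂ + c • x₃ = y) : y ∈ convexHull ℝ s := by
  have := (convex_convexHull ℝ s).sum_mem (t := Finset.univ) (w := ![a, b, c])
    (z := ![x₁, x₂, x₃]) (by intro i _; fin_cases i <;> simpa)
    (by simp [Fin.sum_univ_three, habc])
    (by intro i _; fin_cases i <;> exact subset_convexHull ℝ s (by simpa))
  simpa [Fin.sum_univ_three, hy] using this

/-- The vertex dual to the edge `[(1, -1), (p, 1)]` shared by the three polygons. -/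
noncomputable def commonVertex (p : ℝ) : ℝ × ℝ := (-2 / (p + 1), (p - 1) / (p + 1))

theorem mem_polar2_Qpoly1 (p : ℤ) (y : ℝ × ℝ) :
    y ∈ polar2 (Qpoly1 p) ↔ -1 ≤ y.1 - y.2 ∧ -1 ≤ p * y.1 + y.2 ∧ y.1 ≤ 1 := by
  rw [Qpoly1, polar2_convexHull]
  simp only [polar2, mem_ofPred_eq, forall_mem_insert, mem_singleton_iff, forall_eq]
  constructor <;> rintro ⟨h₁, h₂, h₃⟩ <;> refine ⟨?_, ?_, ?_⟩ <;> linarith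

theorem mem_polar2_Qpoly2 (p : ℤ) (y : ℝ × ℝ) :
    y ∈ polar2 (Qpoly2 p) ↔
      -1 ≤ y.1 - y.2 ∧ -1 ≤ p * y.1 + y.2 ∧ -1 ≤ (p - 1) * y.1 + y.2 ∧ y.1 ≤ 1 := by
  rw [Qpoly2, polar2_convexHull]
  simp only [polar2, mem_ofPred_eq, forall_mem_insert, mem_singleton_iff, forall_eq]
  constructor <;> rintro ⟨h₁, h₂, h₃, h₄⟩ <;> refine ⟨?_, ?_, ?_, ?_⟩ <;> linarith

theorem mem_polar2_Qpoly3 (p : ℤ) (y : ℝ × ℝ) :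
    y ∈ polar2 (Qpoly3 p) ↔ -1 ≤ y.1 - y.2 ∧ -1 ≤ p * y.1 + y.2 ∧ -1 ≤ (p - 1) * y.1 + y.2 ∧
      y.1 ≤ 1 ∧ y.2 ≤ 1 := by
  rw [Qpoly3, polar2_convexHull]
  simp only [polar2, mem_ofPred_eq, forall_mem_insert, mem_singleton_iff, forall_eq]
  constructor <;> rintro ⟨h₁, h₂, h₃, h₄, h₅⟩ <;> refine ⟨?_, ?_, ?_, ?_, ?_⟩ <;> linarith

theorem polar2_Qpoly1_eq_convexHull (p : ℤ) (hp : (1 : ℝ) ≤ p) :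
    polar2 (Qpoly1 p) = convexHull ℝ {commonVertex p, (1, -((p : ℝ) + 1)), (1, 2)} := by
  refine Subset.antisymm (fun y hy => ?_) (convexHull_min ?_ (convex_polar2 _))
  · obtain ⟨h₁, h₂, h₃⟩ := (mem_polar2_Qpoly1 p y).1 hy
    -- the weight of a vertex is the slack of the opposite side, normalised by its value there
    refine mem_convexHull_of_add_add_smul_eq (x₁ := commonVertex p) (x₂ := (1, -((p : ℝ) + 1)))
      (x₃ := (1, 2)) (a := (1 - y.1) * (p + 1) / (p + 3)) (b := (y.1 - y.2 + 1) / (p + 3))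
      (c := (p * y.1 + y.2 + 1) / (p + 3)) (by simp) (by simp) (by simp)
      (div_nonneg (mul_nonneg (by linarith) (by linarith)) (by linarith))
      (div_nonneg (by linarith) (by linarith))
      (div_nonneg (by linarith) (by linarith)) (by field_simp; ring) ?_
    ext <;> simp [commonVertex] <;> field_simp <;> ring
  · simp only [insert_subset_iff, singleton_subset_iff, mem_polar2_Qpoly1, commonVertex]
    refine ⟨⟨?_, ?_, ?_⟩, ⟨?_, ?_, ?_⟩, ⟨?_, ?_, ?_⟩⟩ <;> field_simp <;> linarith

theorem extremePoints_polar2_Qpoly1 (p : ℤ) (hp : (1 : ℝ) ≤ p) :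
    (polar2 (Qpoly1 p)).extremePoints ℝ = {commonVertex p, (1, -((p : ℝ) + 1)), (1, 2)} := by
  have hQ : _ ⊆ Qpoly1 p := subset_convexHull ℝ _
  refine extremePoints_polar2_eq (polar2_Qpoly1_eq_convexHull p hp) ?_
  simp only [forall_mem_insert, forall_eq, mem_singleton_iff, commonVertex]
  refine ⟨⟨(1, -1), hQ (by simp), (p, 1), hQ (by simp), ?_⟩,
    ⟨(p, 1), hQ (by simp), (-1, 0), hQ (by simp), ?_⟩,
    ⟨(-1, 0), hQ (by simp), (1, -1), hQ (by simp), ?_⟩⟩ <;>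
    refine ⟨ne_of_gt ?_, ?_, ?_⟩ <;> norm_num
  all_goals first | linarith | (field_simp; ring)

theorem polar2_Qpoly2_eq_convexHull (p : ℤ) (hp : (1 : ℝ) ≤ p) :
    polar2 (Qpoly2 p) = convexHull ℝ {commonVertex p, (0, -1), (1, -(p : ℝ)), (1, 2)} := by
  refine Subset.antisymm (fun y hy => ?_) (convexHull_min ?_ (convex_polar2 _))
  · obtain ⟨h₁, h₂, h₃, h₄⟩ := (mem_polar2_Qpoly2 p y).1 hy
    rcases le_or_gt (3 * y.1 - y.2 - 1) 0 with hdiag | hdiag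
    · refine mem_convexHull_of_add_add_smul_eq (x₁ := commonVertex p) (x₂ := (0, -1))
        (x₃ := (1, 2)) (a := (1 + y.2 - 3 * y.1) * (p + 1) / (2 * (p + 3)))
        (b := (y.1 - y.2 + 1) / 2) (c := (p * y.1 + y.2 + 1) / (p + 3)) (by simp) (by simp)
        (by simp) (div_nonneg (mul_nonneg (by linarith) (by linarith)) (by linarith))
        (div_nonneg (by linarith) (by linarith)) (div_nonneg (by linarith) (by linarith))
        (by field_simp; ring) ?_
      ext <;> simp [commonVertex] <;> field_simp <;> ring
    · refine mem_convexHull_of_add_add_smul_eq (x₁ := (0, -1)) (x₂ := (1, -(p : ℝ)))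
        (x₃ := (1, 2)) (a := 1 - y.1) (b := (3 * y.1 - y.2 - 1) / (p + 2))
        (c := ((p - 1) * y.1 + y.2 + 1) / (p + 2)) (by simp) (by simp) (by simp) (by linarith)
        (div_nonneg (by linarith) (by linarith)) (div_nonneg (by linarith) (by linarith))
        (by field_simp; ring) ?_
      ext <;> simp <;> field_simp <;> ring
  · simp only [insert_subset_iff, singleton_subset_iff, mem_polar2_Qpoly2, commonVertex]
    refine ⟨⟨?_, ?_, ?_, ?_⟩, ⟨?_, ?_, ?_, ?_⟩, ⟨?_, ?_, ?_, ?_⟩, ⟨?_, ?_, ?_, ?_⟩⟩ <;>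
      field_simp <;> linarith

theorem extremePoints_polar2_Qpoly2 (p : ℤ) (hp : (1 : ℝ) ≤ p) :
    (polar2 (Qpoly2 p)).extremePoints ℝ = {commonVertex p, (0, -1), (1, -(p : ℝ)), (1, 2)} := by
  have hQ : _ ⊆ Qpoly2 p := subset_convexHull ℝ _
  refine extremePoints_polar2_eq (polar2_Qpoly2_eq_convexHull p hp) ?_
  simp only [forall_mem_insert, forall_eq, mem_singleton_iff, commonVertex]
  refine ⟨⟨(1, -1), hQ (by simp), (p, 1), hQ (by simp), ?_⟩,
    ⟨(p, 1), hQ (by simp), (p - 1, 1), hQ (by simp), ?_⟩,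
    ⟨(p - 1, 1), hQ (by simp), (-1, 0), hQ (by simp), ?_⟩,
    ⟨(-1, 0), hQ (by simp), (1, -1), hQ (by simp), ?_⟩⟩ <;>
    refine ⟨ne_of_gt ?_, ?_, ?_⟩ <;> norm_num
  all_goals first | linarith | (field_simp; ring)

theorem polar2_Qpoly3_subset_convexHull (p : ℤ) (hp : (1 : ℝ) ≤ p) :
    polar2 (Qpoly3 p) ⊆
      convexHull ℝ {commonVertex p, (0, -1), (1, -(p : ℝ)), (1, 1), (0, 1)} := by
  intro y hy
  obtain ⟨h₁, h₂, h₃, h₄, h₅⟩ := (mem_polar2_Qpoly3 p y).1 hy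
  rcases le_or_gt y.1 0 with hleft | hright
  · refine mem_convexHull_of_add_add_smul_eq (x₁ := commonVertex p) (x₂ := (0, -1))
      (x₃ := (0, 1)) (a := -y.1 * (p + 1) / 2) (b := (y.1 - y.2 + 1) / 2)
      (c := (p * y.1 + y.2 + 1) / 2) (by simp) (by simp) (by simp)
      (div_nonneg (mul_nonneg (by linarith) (by linarith)) (by norm_num))
      (div_nonneg (by linarith) (by norm_num)) (div_nonneg (by linarith) (by norm_num))
      (by ring) ?_
    ext
    · simp [commonVertex]; field_simp
    · simp [commonVertex]; field_simp; ring
  rcases le_or_gt (2 * y.1 - y.2 - 1) 0 with hdiag | hdiag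
  · refine mem_convexHull_of_add_add_smul_eq (x₁ := (0, -1)) (x₂ := (0, 1)) (x₃ := (1, 1))
      (a := (1 - y.2) / 2) (b := (y.2 - 2 * y.1 + 1) / 2) (c := y.1) (by simp) (by simp)
      (by simp) (div_nonneg (by linarith) (by norm_num)) (div_nonneg (by linarith) (by norm_num))
      hright.le (by ring) ?_
    ext
    · simp
    · simp; ring
  · refine mem_convexHull_of_add_add_smul_eq (x₁ := (0, -1)) (x₂ := (1, 1))
      (x₃ := (1, -(p : ℝ))) (a := 1 - y.1) (b := ((p - 1) * y.1 + y.2 + 1) / (p + 1))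
      (c := (2 * y.1 - y.2 - 1) / (p + 1)) (by simp) (by simp) (by simp) (by linarith)
      (div_nonneg (by linarith) (by linarith)) (div_nonneg (by linarith) (by linarith))
      (by field_simp; ring) ?_
    ext <;> simp <;> field_simp <;> ring

theorem polar2_Qpoly3_eq_convexHull (p : ℤ) (hp : (1 : ℝ) ≤ p) :
    polar2 (Qpoly3 p) =
      convexHull ℝ {commonVertex p, (0, -1), (1, -(p : ℝ)), (1, 1), (0, 1)} := by
  refine Subset.antisymm (polar2_Qpoly3_subset_convexHull p hp)
    (convexHull_min ?_ (convex_polar2 _))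
  simp only [insert_subset_iff, singleton_subset_iff, mem_polar2_Qpoly3, commonVertex]
  refine ⟨⟨?_, ?_, ?_, ?_, ?_⟩, ⟨?_, ?_, ?_, ?_, ?_⟩, ⟨?_, ?_, ?_, ?_, ?_⟩, ⟨?_, ?_, ?_, ?_, ?_⟩,
    ⟨?_, ?_, ?_, ?_, ?_⟩⟩ <;> field_simp <;> linarith

theorem extremePoints_polar2_Qpoly3 (p : ℤ) (hp : (1 : ℝ) ≤ p) :
    (polar2 (Qpoly3 p)).extremePoints ℝ =
      {commonVertex p, (0, -1), (1, -(p : ℝ)), (1, 1), (0, 1)} := by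
  have hQ : _ ⊆ Qpoly3 p := subset_convexHull ℝ _
  refine extremePoints_polar2_eq (polar2_Qpoly3_eq_convexHull p hp) ?_
  simp only [forall_mem_insert, forall_eq, mem_singleton_iff, commonVertex]
  refine ⟨⟨(1, -1), hQ (by simp), (p, 1), hQ (by simp), ?_⟩,
    ⟨(p, 1), hQ (by simp), (p - 1, 1), hQ (by simp), ?_⟩,
    ⟨(p - 1, 1), hQ (by simp), (-1, 0), hQ (by simp), ?_⟩,
    ⟨(-1, 0), hQ (by simp), (0, -1), hQ (by simp), ?_⟩,
    ⟨(0, -1), hQ (by simp), (1, -1), hQ (by simp), ?_⟩⟩ <;>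
    refine ⟨ne_of_gt ?_, ?_, ?_⟩ <;> norm_num
  all_goals first | linarith | (field_simp; ring)

/-- the vertex sets of the polar polygons Q̊_p^[k], k = 1,2,3. -/
theorem stmt10 (p : ℤ) (hp : 1 ≤ p) :
    Set.extremePoints ℝ (polar2 (Qpoly1 p)) =
      ({(-2 / ((p : ℝ) + 1), ((p : ℝ) - 1) / ((p : ℝ) + 1)), (1, -((p : ℝ) + 1)), (1, 2)} :
        Set (ℝ × ℝ)) ∧
    Set.extremePoints ℝ (polar2 (Qpoly2 p)) =
      ({(-2 / ((p : ℝ) + 1), ((p : ℝ) - 1) / ((p : ℝ) + 1)), (0, -1), (1, -(p : ℝ)), (1, 2)} :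
        Set (ℝ × ℝ)) ∧
    Set.extremePoints ℝ (polar2 (Qpoly3 p)) =
      ({(-2 / ((p : ℝ) + 1), ((p : ℝ) - 1) / ((p : ℝ) + 1)), (0, -1), (1, -(p : ℝ)), (1, 1),
        (0, 1)} : Set (ℝ × ℝ)) := by
  have hp' : (1 : ℝ) ≤ p := by exact_mod_cast hp
  exact ⟨extremePoints_polar2_Qpoly1 p hp', extremePoints_polar2_Qpoly2 p hp',
    extremePoints_polar2_Qpoly3 p hp'⟩
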